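/- arXiv:1911.09097 — 3 statements merged into one kernel-verified Lean document; each statement's English description precedes it below -/
import Mathlib

section
/- Under the Dirac dual ψ̄ = ψ†γ0, all same-type and mixed-type Dirac norms of the boosted Elko spinors vanish: λ̄^S_h · λ^S_h = 0 and λ̄^A_h · λ^A_h = 0 for each helicity label h ∈ {(-,+), (+,-)}, and λ̄^S_h · λ^A_{h'} = 0 and λ̄^A_h · λ^S_{h'} = 0 for all helicity labels h, h' ∈ {(-,+), (+,-)}. -/
/-! Every Elko spinor has the form `(ζ Θ v̄, v)` with `ζ = ±i`, and for two such spinors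
`ψ̄ χ = ζ̄ ω(v, w) - ζ' conj ω(v, w)`, where `ω(v, w) = det [v; w]` is the antisymmetric form
on `ℂ²`. Equal helicities share `v`, so `ω = 0`. Pairing an S with an A spinor means
`ζ' = ζ̄`, so the pairing vanishes as soon as `ω` is real, and for opposite helicities
`ω = ∓ B₊ B₋` because `cos² + sin² = 1` and `e^{iφ/2} e^{-iφ/2} = 1`. -/

open Matrix Complex

noncomputable section

/-- Pauli matrices -/
def σ1 : Matrix (Fin 2) (Fin 2) ℂ := !![0, 1; 1, 0]
def σ2 : Matrix (Fin 2) (Fin 2) ℂ := !![0, -I; I, 0]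
def σ3 : Matrix (Fin 2) (Fin 2) ℂ := !![1, 0; 0, -1]

/-- Dirac matrices in the Weyl representation, blocks [[0,1],[1,0]], [[0,σk],[-σk,0]] -/
def γ0 : Matrix (Fin 4) (Fin 4) ℂ := !![0,0,1,0; 0,0,0,1; 1,0,0,0; 0,1,0,0]
def γ1 : Matrix (Fin 4) (Fin 4) ℂ := !![0,0,0,1; 0,0,1,0; 0,-1,0,0; -1,0,0,0]
def γ2 : Matrix (Fin 4) (Fin 4) ℂ := !![0,0,0,-I; 0,0,I,0; 0,I,0,0; -I,0,0,0]
def γ3 : Matrix (Fin 4) (Fin 4) ℂ := !![0,0,1,0; 0,0,0,-1; -1,0,0,0; 0,1,0,0]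

/-- the energy E = sqrt(p² + m²) -/
def Ee (m p : ℝ) : ℝ := Real.sqrt (p^2 + m^2)
/-- boost factors B± = sqrt((E+m)/2)(1 ± p/(E+m)) -/
def Bp (m p : ℝ) : ℝ := Real.sqrt ((Ee m p + m)/2) * (1 + p/(Ee m p + m))
def Bm (m p : ℝ) : ℝ := Real.sqrt ((Ee m p + m)/2) * (1 - p/(Ee m p + m))

/-- e^{iφ/2}, e^{-iφ/2}, e^{iφ}, e^{-iφ} -/
def eP (φ : ℝ) : ℂ := Complex.exp (I * (φ:ℂ) / 2)
def eM (φ : ℝ) : ℂ := Complex.exp (-(I * (φ:ℂ)) / 2)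
def ePf (φ : ℝ) : ℂ := Complex.exp (I * (φ:ℂ))
def eMf (φ : ℝ) : ℂ := Complex.exp (-(I * (φ:ℂ)))

/-- boosted Elko spinors -/
def lamS₁ (m p θ φ : ℝ) : Fin 4 → ℂ :=
  ((Bm m p : ℝ) : ℂ) • ![ -I * (Real.sin (θ/2) : ℂ) * eM φ,
                           I * (Real.cos (θ/2) : ℂ) * eP φ,
                           (Real.cos (θ/2) : ℂ) * eM φ,
                           (Real.sin (θ/2) : ℂ) * eP φ ]

def lamS₂ (m p θ φ : ℝ) : Fin 4 → ℂ :=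
  ((Bp m p : ℝ) : ℂ) • ![ I * (Real.cos (θ/2) : ℂ) * eM φ,
                           I * (Real.sin (θ/2) : ℂ) * eP φ,
                           (Real.sin (θ/2) : ℂ) * eM φ,
                           -(Real.cos (θ/2) : ℂ) * eP φ ]

def lamA₁ (m p θ φ : ℝ) : Fin 4 → ℂ :=
  ((Bm m p : ℝ) : ℂ) • ![ I * (Real.sin (θ/2) : ℂ) * eM φ,
                           -I * (Real.cos (θ/2) : ℂ) * eP φ,
                           (Real.cos (θ/2) : ℂ) * eM φ,
                           (Real.sin (θ/2) : ℂ) * eP φ ]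

def lamA₂ (m p θ φ : ℝ) : Fin 4 → ℂ :=
  ((Bp m p : ℝ) : ℂ) • ![ -I * (Real.cos (θ/2) : ℂ) * eM φ,
                           -I * (Real.sin (θ/2) : ℂ) * eP φ,
                           (Real.sin (θ/2) : ℂ) * eM φ,
                           -(Real.cos (θ/2) : ℂ) * eP φ ]

/-- the Ξ(p) operator -/
def Ξop (m p θ φ : ℝ) : Matrix (Fin 4) (Fin 4) ℂ :=
  (1/(m:ℂ)) •
    !![ I * ((p * Real.sin θ : ℝ) : ℂ),
        -I * ((Ee m p + p * Real.cos θ : ℝ) : ℂ) * eMf φ, 0, 0;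
        I * ((Ee m p - p * Real.cos θ : ℝ) : ℂ) * ePf φ,
        -I * ((p * Real.sin θ : ℝ) : ℂ), 0, 0;
        0, 0, -I * ((p * Real.sin θ : ℝ) : ℂ),
        -I * ((Ee m p - p * Real.cos θ : ℝ) : ℂ) * eMf φ;
        0, 0, I * ((Ee m p + p * Real.cos θ : ℝ) : ℂ) * ePf φ,
        I * ((p * Real.sin θ : ℝ) : ℂ) ]

/-- the G(φ) matrix appearing in the Elko spin sums -/
def Gmat (φ : ℝ) : Matrix (Fin 4) (Fin 4) ℂ :=
  !![0, 0, 0, -I * eMf φ;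
     0, 0, I * ePf φ, 0;
     0, -I * eMf φ, 0, 0;
     I * ePf φ, 0, 0, 0]

/-- momentum slash pslash = E γ0 + p sinθ cosφ γ1 + p sinθ sinφ γ2 + p cosθ γ3 -/
def pslash (m p θ φ : ℝ) : Matrix (Fin 4) (Fin 4) ℂ :=
  ((Ee m p : ℝ) : ℂ) • γ0 + ((p * Real.sin θ * Real.cos φ : ℝ) : ℂ) • γ1
    + ((p * Real.sin θ * Real.sin φ : ℝ) : ℂ) • γ2 + ((p * Real.cos θ : ℝ) : ℂ) • γ3

/-- Elko dual rows ¬λ -/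
def dS₁ (m p θ φ : ℝ) : Fin 4 → ℂ := I • Matrix.vecMul (star (lamS₂ m p θ φ)) γ0
def dS₂ (m p θ φ : ℝ) : Fin 4 → ℂ := (-I) • Matrix.vecMul (star (lamS₁ m p θ φ)) γ0
def dA₁ (m p θ φ : ℝ) : Fin 4 → ℂ := I • Matrix.vecMul (star (lamA₂ m p θ φ)) γ0
def dA₂ (m p θ φ : ℝ) : Fin 4 → ℂ := (-I) • Matrix.vecMul (star (lamA₁ m p θ φ)) γ0

end

/-- the Dirac-dual pairing ψ̄χ = ψ†γ0 χ -/
noncomputable def diracPair (ψ χ : Fin 4 → ℂ) : ℂ := dotProduct (Matrix.vecMul (star ψ) γ0) χ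

open ComplexConjugate

/-- `(ζ Θ v̄, v)`, with `Θ = -iσ₂ = !![0, -1; 1, 0]` Wigner's time-reversal matrix. -/
def elkoSpinor (ζ : ℂ) (v : Fin 2 → ℂ) : Fin 4 → ℂ :=
  ![-(ζ * conj (v 1)), ζ * conj (v 0), v 0, v 1]

theorem diracPair_elkoSpinor (ζ ζ' : ℂ) (v w : Fin 2 → ℂ) :
    diracPair (elkoSpinor ζ v) (elkoSpinor ζ' w) =
      conj ζ * (of ![v, w]).det - ζ' * conj (of ![v, w]).det := by
  simp only [diracPair, elkoSpinor, γ0, vecMul, dotProduct, Fin.sum_univ_four, det_fin_two,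
    of_apply, cons_val, Pi.star_apply, star_def, map_sub, map_mul, map_neg, conj_conj]
  ring

theorem diracPair_elkoSpinor_same (ζ ζ' : ℂ) (v : Fin 2 → ℂ) :
    diracPair (elkoSpinor ζ v) (elkoSpinor ζ' v) = 0 := by
  rw [diracPair_elkoSpinor, det_zero_of_row_eq (i := 0) (j := 1) (by simp) rfl]
  simp

theorem diracPair_elkoSpinor_conj {ζ ζ' : ℂ} {v w : Fin 2 → ℂ} (hζ : ζ' = conj ζ)
    (hvw : conj (of ![v, w]).det = (of ![v, w]).det) :
    diracPair (elkoSpinor ζ v) (elkoSpinor ζ' w) = 0 := by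
  rw [diracPair_elkoSpinor, hvw, hζ]
  ring

theorem det_of_fin_two_swap (v w : Fin 2 → ℂ) : (of ![w, v]).det = -(of ![v, w]).det := by
  simp only [det_fin_two, of_apply, cons_val]
  ring

theorem conj_eP (φ : ℝ) : conj (eP φ) = eM φ := by
  rw [eP, eM, ← exp_conj]
  simp [map_div₀, conj_I, conj_ofReal, map_ofNat]

theorem conj_eM (φ : ℝ) : conj (eM φ) = eP φ := by
  rw [← conj_eP, conj_conj]

theorem eP_mul_eM (φ : ℝ) : eP φ * eM φ = 1 := by
  rw [eP, eM, ← exp_add]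
  ring_nf
  exact exp_zero

noncomputable def weylMinus (m p θ φ : ℝ) : Fin 2 → ℂ :=
  ((Bm m p : ℝ) : ℂ) • ![(Real.cos (θ/2) : ℂ) * eM φ, (Real.sin (θ/2) : ℂ) * eP φ]

noncomputable def weylPlus (m p θ φ : ℝ) : Fin 2 → ℂ :=
  ((Bp m p : ℝ) : ℂ) • ![(Real.sin (θ/2) : ℂ) * eM φ, -(Real.cos (θ/2) : ℂ) * eP φ]

section ElkoSpinors

variable (m p θ φ : ℝ)

theorem lamS₁_eq : lamS₁ m p θ φ = elkoSpinor I (weylMinus m p θ φ) := by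
  ext i
  fin_cases i <;>
    simp [lamS₁, elkoSpinor, weylMinus, conj_eP, conj_eM, -ofReal_cos, -ofReal_sin] <;> ring

theorem lamA₁_eq : lamA₁ m p θ φ = elkoSpinor (-I) (weylMinus m p θ φ) := by
  ext i
  fin_cases i <;>
    simp [lamA₁, elkoSpinor, weylMinus, conj_eP, conj_eM, -ofReal_cos, -ofReal_sin] <;> ring

theorem lamS₂_eq : lamS₂ m p θ φ = elkoSpinor I (weylPlus m p θ φ) := by
  ext i
  fin_cases i <;>
    simp [lamS₂, elkoSpinor, weylPlus, conj_eP, conj_eM, -ofReal_cos, -ofReal_sin] <;> ring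

theorem lamA₂_eq : lamA₂ m p θ φ = elkoSpinor (-I) (weylPlus m p θ φ) := by
  ext i
  fin_cases i <;>
    simp [lamA₂, elkoSpinor, weylPlus, conj_eP, conj_eM, -ofReal_cos, -ofReal_sin] <;> ring

theorem det_weylMinus_weylPlus :
    (of ![weylMinus m p θ φ, weylPlus m p θ φ]).det = ((-(Bm m p * Bp m p) : ℝ) : ℂ) := by
  have hcs : (Real.cos (θ/2) : ℂ) ^ 2 + (Real.sin (θ/2) : ℂ) ^ 2 = 1 := by
    exact_mod_cast Real.cos_sq_add_sin_sq (θ/2)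
  simp only [det_fin_two, of_apply, cons_val, weylMinus, weylPlus, Pi.smul_apply, smul_eq_mul,
    ofReal_neg, ofReal_mul]
  linear_combination -(Bm m p * Bp m p : ℂ) * (eP φ * eM φ * hcs + eP_mul_eM φ)

end ElkoSpinors

theorem elko_dirac_norms_vanish_general (m p θ φ : ℝ) :
    -- same-type, same-helicity norms
    diracPair (lamS₁ m p θ φ) (lamS₁ m p θ φ) = 0 ∧
    diracPair (lamS₂ m p θ φ) (lamS₂ m p θ φ) = 0 ∧
    diracPair (lamA₁ m p θ φ) (lamA₁ m p θ φ) = 0 ∧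
    diracPair (lamA₂ m p θ φ) (lamA₂ m p θ φ) = 0 ∧
    -- mixed S-A products, all helicity combinations
    diracPair (lamS₁ m p θ φ) (lamA₁ m p θ φ) = 0 ∧
    diracPair (lamS₁ m p θ φ) (lamA₂ m p θ φ) = 0 ∧
    diracPair (lamS₂ m p θ φ) (lamA₁ m p θ φ) = 0 ∧
    diracPair (lamS₂ m p θ φ) (lamA₂ m p θ φ) = 0 ∧
    -- mixed A-S products, all helicity combinations
    diracPair (lamA₁ m p θ φ) (lamS₁ m p θ φ) = 0 ∧
    diracPair (lamA₁ m p θ φ) (lamS₂ m p θ φ) = 0 ∧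
    diracPair (lamA₂ m p θ φ) (lamS₁ m p θ φ) = 0 ∧
    diracPair (lamA₂ m p θ φ) (lamS₂ m p θ φ) = 0 := by
  have hreal : conj (of ![weylMinus m p θ φ, weylPlus m p θ φ]).det =
      (of ![weylMinus m p θ φ, weylPlus m p θ φ]).det := by
    rw [det_weylMinus_weylPlus, conj_ofReal]
  have hreal' : conj (of ![weylPlus m p θ φ, weylMinus m p θ φ]).det =
      (of ![weylPlus m p θ φ, weylMinus m p θ φ]).det := by
    rw [det_of_fin_two_swap, map_neg, hreal]
  have hI : -I = conj I := conj_I.symm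
  have hnegI : I = conj (-I) := by rw [map_neg, conj_I, neg_neg]
  rw [lamS₁_eq, lamS₂_eq, lamA₁_eq, lamA₂_eq]
  exact ⟨diracPair_elkoSpinor_same _ _ _, diracPair_elkoSpinor_same _ _ _,
    diracPair_elkoSpinor_same _ _ _, diracPair_elkoSpinor_same _ _ _,
    diracPair_elkoSpinor_same _ _ _, diracPair_elkoSpinor_conj hI hreal,
    diracPair_elkoSpinor_conj hI hreal', diracPair_elkoSpinor_same _ _ _,
    diracPair_elkoSpinor_same _ _ _, diracPair_elkoSpinor_conj hnegI hreal,
    diracPair_elkoSpinor_conj hnegI hreal', diracPair_elkoSpinor_same _ _ _⟩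

/-- Under the Dirac dual ψ̄ = ψ†γ0, all same-type and mixed-type Dirac norms of the
boosted Elko spinors vanish. -/
theorem elko_dirac_norms_vanish (m p θ φ : ℝ) (hm : 0 < m) (hp : 0 ≤ p) :
    -- same-type, same-helicity norms
    diracPair (lamS₁ m p θ φ) (lamS₁ m p θ φ) = 0 ∧
    diracPair (lamS₂ m p θ φ) (lamS₂ m p θ φ) = 0 ∧
    diracPair (lamA₁ m p θ φ) (lamA₁ m p θ φ) = 0 ∧
    diracPair (lamA₂ m p θ φ) (lamA₂ m p θ φ) = 0 ∧
    -- mixed S-A products, all helicity combinations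
    diracPair (lamS₁ m p θ φ) (lamA₁ m p θ φ) = 0 ∧
    diracPair (lamS₁ m p θ φ) (lamA₂ m p θ φ) = 0 ∧
    diracPair (lamS₂ m p θ φ) (lamA₁ m p θ φ) = 0 ∧
    diracPair (lamS₂ m p θ φ) (lamA₂ m p θ φ) = 0 ∧
    -- mixed A-S products, all helicity combinations
    diracPair (lamA₁ m p θ φ) (lamS₁ m p θ φ) = 0 ∧
    diracPair (lamA₁ m p θ φ) (lamS₂ m p θ φ) = 0 ∧
    diracPair (lamA₂ m p θ φ) (lamS₁ m p θ φ) = 0 ∧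
    diracPair (lamA₂ m p θ φ) (lamS₂ m p θ φ) = 0 :=
  elko_dirac_norms_vanish_general m p θ φ
end

section
/- The operator Ξ(p) squares to the identity: Ξ(p)·Ξ(p) = 1 (the 4×4 identity matrix). In particular Ξ(p) is invertible and Ξ(p)⁻¹ = Ξ(p). -/
open Matrix Complex

/-! Each 2×2 block of `m • Ξ(p)` is traceless with determinant `p² - E² = -m²`, so by
Cayley–Hamilton it squares to `m² • 1`. -/

theorem blockDiag_traceless_mul_self {R : Type*} [CommRing R] {a b c d a' b' c' d' k : R}
    (hd : d = -a) (hd' : d' = -a') (h : a ^ 2 + b * c = k) (h' : a' ^ 2 + b' * c' = k) :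
    !![a, b, 0, 0; c, d, 0, 0; 0, 0, a', b'; 0, 0, c', d'] *
        !![a, b, 0, 0; c, d, 0, 0; 0, 0, a', b'; 0, 0, c', d'] =
      k • (1 : Matrix (Fin 4) (Fin 4) R) := by
  subst hd hd' h
  ext i j
  fin_cases i <;> fin_cases j <;> simp [Matrix.mul_apply, Fin.sum_univ_four] <;>
    first | ring1 | linear_combination h'

theorem Ee_sq (m p : ℝ) : Ee m p ^ 2 = p ^ 2 + m ^ 2 :=
  Real.sq_sqrt (by positivity)

theorem Ee_add_mul_sub_sub_sq (m p θ : ℝ) :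
    (Ee m p + p * Real.cos θ) * (Ee m p - p * Real.cos θ) - (p * Real.sin θ) ^ 2 = m ^ 2 := by
  linear_combination Ee_sq m p - p ^ 2 * Real.sin_sq_add_cos_sq θ

theorem eMf_mul_ePf (φ : ℝ) : eMf φ * ePf φ = 1 := by
  rw [eMf, ePf, ← Complex.exp_add, neg_add_cancel, Complex.exp_zero]

theorem xi_squares_to_one_general (m p θ φ : ℝ) (hm : 0 < m) :
    Ξop m p θ φ * Ξop m p θ φ = 1 ∧
    IsUnit (Ξop m p θ φ) ∧ (Ξop m p θ φ)⁻¹ = Ξop m p θ φ := by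
  have hshell : ((Ee m p + p * Real.cos θ : ℝ) : ℂ) * ((Ee m p - p * Real.cos θ : ℝ) : ℂ)
      - ((p * Real.sin θ : ℝ) : ℂ) ^ 2 = (m : ℂ) ^ 2 := by
    exact_mod_cast Ee_add_mul_sub_sub_sq m p θ
  have hm' : (m : ℂ) ≠ 0 := by exact_mod_cast hm.ne'
  have hsq : Ξop m p θ φ * Ξop m p θ φ = 1 := by
    rw [Ξop, Matrix.smul_mul, Matrix.mul_smul, smul_smul]
    set X : ℂ := ((p * Real.sin θ : ℝ) : ℂ)
    set Y : ℂ := ((Ee m p + p * Real.cos θ : ℝ) : ℂ)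
    set Z : ℂ := ((Ee m p - p * Real.cos θ : ℝ) : ℂ)
    rw [blockDiag_traceless_mul_self (k := (m : ℂ) ^ 2) (by ring) (by ring)
      (by linear_combination hshell + (X ^ 2 - Y * Z) * I_sq - I ^ 2 * Y * Z * eMf_mul_ePf φ)
      (by linear_combination hshell + (X ^ 2 - Y * Z) * I_sq - I ^ 2 * Y * Z * eMf_mul_ePf φ),
      smul_smul, one_div, ← mul_inv, ← sq, inv_mul_cancel₀ (pow_ne_zero 2 hm'), one_smul]
  exact ⟨hsq, IsUnit.of_mul_eq_one_right _ hsq, Matrix.inv_eq_right_inv hsq⟩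

/-- Ξ(p) squares to the identity; in particular Ξ(p) is invertible and Ξ(p)⁻¹ = Ξ(p). -/
theorem xi_squares_to_one (m p θ φ : ℝ) (hm : 0 < m) (hp : 0 ≤ p) :
    Ξop m p θ φ * Ξop m p θ φ = 1 ∧
    IsUnit (Ξop m p θ φ) ∧ (Ξop m p θ φ)⁻¹ = Ξop m p θ φ :=
  xi_squares_to_one_general m p θ φ hm
end

section
/- The Fierz–Pauli–Kofink contraction identity holds for arbitrary spinors: for every row covector w ∈ ℂ⁴ (acting on columns by matrix multiplication) and every column ψ ∈ ℂ⁴, (w·γ0·ψ)·(γ0·ψ) - Σ_{k=1}^{3} (w·γk·ψ)·(γk·ψ) = (w·ψ)·ψ - (w·γ5·ψ)·(γ5·ψ), as an equality of vectors in ℂ⁴. (Taking w = ¬λ·Γ for any 4×4 matrix Γ gives the identity (¬λ Γ γ_μ λ)γ^μλ = (¬λ Γ λ)λ - (¬λ Γ γ5 λ)γ5 λ used to derive the relations J_μγ^μλ_L = (A - iB)λ_R and their companions.) -/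
/-!
In the Weyl basis every γ^μ is a signed permutation matrix, except γ2, which is `i` times one; as
each γ^μ enters the contraction twice, that factor only contributes `i² = -1`, and γ5 is
diag(1,1,-1,-1). Both sides thus become explicit vectors with integer polynomial components, and
their equality is, blockwise, the completeness relation `Σ_a σ_a ⊗ σ_a = 2 · swap` of the Pauli
matrices (`σ_0 = 1`), checked componentwise.
-/

open Matrix Complex

noncomputable section

/-- γ5 := -i γ0γ1γ2γ3 -/
def γ5 : Matrix (Fin 4) (Fin 4) ℂ := (-I) • (γ0 * γ1 * γ2 * γ3)

end

lemma γ5_eq_diagonal : γ5 = diagonal ![1, 1, -1, -1] := by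
  ext i j
  fin_cases i <;> fin_cases j <;> simp [γ5, γ0, γ1, γ2, γ3]

section WeylBasis

variable (ψ : Fin 4 → ℂ)

lemma γ0_mulVec : γ0 *ᵥ ψ = ![ψ 2, ψ 3, ψ 0, ψ 1] := by
  ext i; fin_cases i <;> simp [γ0, mulVec, dotProduct, Fin.sum_univ_four]

lemma γ1_mulVec : γ1 *ᵥ ψ = ![ψ 3, ψ 2, -ψ 1, -ψ 0] := by
  ext i; fin_cases i <;> simp [γ1, mulVec, dotProduct, Fin.sum_univ_four]

lemma γ2_mulVec : γ2 *ᵥ ψ = I • ![-ψ 3, ψ 2, ψ 1, -ψ 0] := by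
  ext i; fin_cases i <;> simp [γ2, mulVec, dotProduct, Fin.sum_univ_four]

lemma γ3_mulVec : γ3 *ᵥ ψ = ![ψ 2, -ψ 3, -ψ 0, ψ 1] := by
  ext i; fin_cases i <;> simp [γ3, mulVec, dotProduct, Fin.sum_univ_four]

lemma γ5_mulVec : γ5 *ᵥ ψ = ![ψ 0, ψ 1, -ψ 2, -ψ 3] := by
  ext i; fin_cases i <;> simp [γ5_eq_diagonal, mulVec_diagonal]

end WeylBasis

lemma dotProduct_smul_smul_smul {R : Type*} {n : Type*} [Fintype n] [CommSemiring R] (c : R)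
    (w v : n → R) : (w ⬝ᵥ c • v) • c • v = (c * c) • (w ⬝ᵥ v) • v := by
  rw [dotProduct_smul, smul_eq_mul, smul_smul, smul_smul, mul_right_comm, mul_comm]

/-- The Fierz–Pauli–Kofink contraction identity:
(wγ_μψ)γ^μψ = (wψ)ψ - (wγ5ψ)γ5ψ, contracting with the Minkowski metric diag(1,-1,-1,-1). -/
theorem fierz_pauli_kofink_contraction (w ψ : Fin 4 → ℂ) :
    (dotProduct w (γ0.mulVec ψ)) • γ0.mulVec ψ
      - (dotProduct w (γ1.mulVec ψ)) • γ1.mulVec ψ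
      - (dotProduct w (γ2.mulVec ψ)) • γ2.mulVec ψ
      - (dotProduct w (γ3.mulVec ψ)) • γ3.mulVec ψ
    = (dotProduct w ψ) • ψ
      - (dotProduct w (γ5.mulVec ψ)) • γ5.mulVec ψ := by
  rw [γ0_mulVec, γ1_mulVec, γ2_mulVec, dotProduct_smul_smul_smul, I_mul_I, γ3_mulVec, γ5_mulVec]
  ext i
  fin_cases i <;> simp [dotProduct, Fin.sum_univ_four] <;> ring
end
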